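/- arXiv:2403.13939 — 2 statements merged into one kernel-verified Lean document; each statement's English description precedes it below -/
import Mathlib

section
/- If R is an integral domain, then an R-module M is torsion free if and only if M is regular fusible. -/
/-- `m` is a torsion element of the `R`-module `M`. -/
def IsTorsionElt (R M : Type*) [CommRing R] [AddCommGroup M] [Module R M] (m : M) : Prop :=
  ∃ r : R, r ≠ 0 ∧ r • m = 0

/-- `m` is a torsion-free element of the `R`-module `M` (`ann_R(m) = 0`). -/
def IsTorsionFreeElt (R M : Type*) [CommRing R] [AddCommGroup M] [Module R M] (m : M) : Prop :=
  ∀ r : R, r • m = 0 → r = 0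

/-- `r ∈ Zd(M)`: `r` is a zero divisor of the `R`-module `M`. -/
def IsZdElt (R M : Type*) [CommRing R] [AddCommGroup M] [Module R M] (r : R) : Prop :=
  ∃ m : M, m ≠ 0 ∧ r • m = 0

/-- `m` is fusible: it is the sum of a torsion and a torsion-free element. -/
def FusibleElt (R M : Type*) [CommRing R] [AddCommGroup M] [Module R M] (m : M) : Prop :=
  ∃ x y : M, IsTorsionElt R M x ∧ IsTorsionFreeElt R M y ∧ m = x + y

/-- `M` is a fusible `R`-module. -/
def FusibleModule (R M : Type*) [CommRing R] [AddCommGroup M] [Module R M] : Prop :=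
  ∀ m : M, m ≠ 0 → FusibleElt R M m

/-- `M` is a regular fusible `R`-module. -/
def RegularFusibleModule (R M : Type*) [CommRing R] [AddCommGroup M] [Module R M] : Prop :=
  ∀ m : M, m ≠ 0 → ∃ r : R, ¬ IsZdElt R M r ∧ FusibleElt R M (r • m)

/-!
Torsion-free modules are regular fusible with `r = 1`, writing `m = 0 + m`. Conversely, over a
domain the torsion elements form a submodule, so if `s • m = 0` with `s ≠ 0` and `r • m = x + y`
with `x` torsion, then `y = r • m - x` is torsion as well and cannot be torsion free.
-/

section

variable {R M : Type*} [CommRing R] [AddCommGroup M] [Module R M]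

theorem isTorsionElt_iff_mem_torsion [IsDomain R] {m : M} :
    IsTorsionElt R M m ↔ m ∈ Submodule.torsion R M := by
  simp only [IsTorsionElt, Submodule.mem_torsion_iff, Subtype.exists, Submonoid.mk_smul,
    mem_nonZeroDivisors_iff_ne_zero, exists_prop]

theorem isTorsionElt_zero [Nontrivial R] : IsTorsionElt R M 0 :=
  ⟨1, one_ne_zero, smul_zero 1⟩

theorem IsTorsionElt.smul {m : M} (hm : IsTorsionElt R M m) (r : R) :
    IsTorsionElt R M (r • m) :=
  let ⟨s, hs, hsm⟩ := hm
  ⟨s, hs, by rw [smul_comm, hsm, smul_zero]⟩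

theorem IsTorsionElt.not_isTorsionFreeElt {m : M} (hm : IsTorsionElt R M m) :
    ¬ IsTorsionFreeElt R M m := fun hfree ↦
  let ⟨r, hr, hrm⟩ := hm
  hr (hfree r hrm)

theorem isTorsionFreeElt_of_forall_isTorsionElt_eq_zero
    (htf : ∀ m : M, IsTorsionElt R M m → m = 0) {m : M} (hm : m ≠ 0) :
    IsTorsionFreeElt R M m := by
  intro r hrm
  by_contra hr
  exact hm (htf m ⟨r, hr, hrm⟩)

theorem not_isZdElt_one : ¬ IsZdElt R M 1 := by
  rintro ⟨m, hm, h1m⟩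
  exact hm (by simpa using h1m)

theorem IsTorsionElt.not_fusibleElt [IsDomain R] {m : M} (hm : IsTorsionElt R M m) :
    ¬ FusibleElt R M m := by
  rintro ⟨x, y, hx, hy, rfl⟩
  rw [isTorsionElt_iff_mem_torsion] at hm hx
  have hy_torsion : IsTorsionElt R M y := by
    rw [isTorsionElt_iff_mem_torsion, ← add_sub_cancel_left x y]
    exact Submodule.sub_mem _ hm hx
  exact hy_torsion.not_isTorsionFreeElt hy

end

/-- Over an integral domain, `M` is torsion free iff `M` is regular fusible. -/
theorem torsionFree_iff_regularFusible_of_isDomain (R M : Type*) [CommRing R] [IsDomain R]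
    [AddCommGroup M] [Module R M] :
    (∀ m : M, IsTorsionElt R M m → m = 0) ↔ RegularFusibleModule R M := by
  constructor
  · intro htf m hm
    exact ⟨1, not_isZdElt_one, 0, m, isTorsionElt_zero,
      isTorsionFreeElt_of_forall_isTorsionElt_eq_zero htf hm, by simp⟩
  · intro hrf m hm
    by_contra hm0
    obtain ⟨r, -, hfus⟩ := hrf m hm0
    exact (hm.smul r).not_fusibleElt hfus
end

section
/- Let R be a commutative ring, M a regular fusible R-module, and S a multiplicatively closed subset of R consisting of regular elements of R. Then S⁻¹M is a regular fusible S⁻¹R-module. -/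
/-!
If `r • m = x + y` with `r` regular on `M`, `x` torsion and `y` torsion-free, then
`r • (m / s) = x / s + y / s`. The element `r / 1` stays regular on `S⁻¹M`; as `S` consists of
non-zero-divisors, `R → S⁻¹R` is injective, so the torsion witness of `x` survives; and
`(b / u) • (y / s) = 0` means `(t * b) • y = 0` for some `t ∈ S`, forcing `t * b = 0`,
so `b = 0`.
-/

section LocalizedModule

open LocalizedModule

variable {R M : Type*} [CommRing R] [AddCommGroup M] [Module R M] {S : Submonoid R}

theorem LocalizedModule.mk_eq_zero_iff {m : M} {s : S} : mk m s = 0 ↔ ∃ t : S, t • m = 0 := by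
  rw [IsLocalizedModule.mk_eq_mk', IsLocalizedModule.mk'_eq_zero']

theorem LocalizedModule.mk_add_mk_same (x y : M) (s : S) : mk (x + y) s = mk x s + mk y s := by
  simp only [IsLocalizedModule.mk_eq_mk', IsLocalizedModule.mk'_add]

theorem not_isZdElt_algebraMap_localizedModule {r : R} (hr : ¬ IsZdElt R M r) :
    ¬ IsZdElt (Localization S) (LocalizedModule S M) (algebraMap R (Localization S) r) := by
  rintro ⟨z, hz, hrz⟩
  induction z using LocalizedModule.induction_on with
  | _ n u =>
  rw [algebraMap_smul, smul'_mk, mk_eq_zero_iff] at hrz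
  obtain ⟨t, ht⟩ := hrz
  have htn : t • n = 0 := by
    by_contra htn
    exact hr ⟨t • n, htn, by rwa [smul_comm]⟩
  exact hz (mk_eq_zero_iff.2 ⟨t, htn⟩)

theorem IsTorsionElt.localizedModule_mk (hS : S ≤ nonZeroDivisors R) {x : M}
    (hx : IsTorsionElt R M x) (s : S) :
    IsTorsionElt (Localization S) (LocalizedModule S M) (mk x s) := by
  obtain ⟨a, ha, hax⟩ := hx
  refine ⟨algebraMap R (Localization S) a,
    (map_ne_zero_iff _ (IsLocalization.injective (Localization S) hS)).2 ha, ?_⟩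
  rw [algebraMap_smul, smul'_mk, hax, zero_mk]

theorem IsTorsionFreeElt.localizedModule_mk (hS : S ≤ nonZeroDivisors R) {y : M}
    (hy : IsTorsionFreeElt R M y) (s : S) :
    IsTorsionFreeElt (Localization S) (LocalizedModule S M) (mk y s) := by
  intro c hc
  induction c using Localization.induction_on with
  | _ p =>
  obtain ⟨b, u⟩ := p
  rw [mk_smul_mk, mk_eq_zero_iff] at hc
  obtain ⟨t, ht⟩ := hc
  have htb : (t : R) * b = 0 := hy _ (by rwa [Submonoid.smul_def, smul_smul] at ht)
  rw [(hS t.2).2 b (by rwa [mul_comm] at htb), Localization.mk_zero]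

theorem FusibleElt.localizedModule_mk (hS : S ≤ nonZeroDivisors R) {m : M}
    (hm : FusibleElt R M m) (s : S) :
    FusibleElt (Localization S) (LocalizedModule S M) (mk m s) := by
  obtain ⟨x, y, hx, hy, rfl⟩ := hm
  exact ⟨mk x s, mk y s, hx.localizedModule_mk hS s, hy.localizedModule_mk hS s,
    mk_add_mk_same x y s⟩

end LocalizedModule

/-- If `M` is regular fusible and `S` consists of regular elements of `R`,
then `S⁻¹M` is a regular fusible `S⁻¹R`-module. -/
theorem regularFusible_localization (R M : Type*) [CommRing R] [AddCommGroup M]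
    [Module R M] (S : Submonoid R) (hS : ∀ s ∈ S, s ∈ nonZeroDivisors R)
    (h : RegularFusibleModule R M) :
    RegularFusibleModule (Localization S) (LocalizedModule S M) := by
  intro z hz
  induction z using LocalizedModule.induction_on with
  | _ m s =>
  have hm : m ≠ 0 := by
    rintro rfl
    exact hz (LocalizedModule.zero_mk s)
  obtain ⟨r, hr, hrm⟩ := h m hm
  refine ⟨algebraMap R (Localization S) r, not_isZdElt_algebraMap_localizedModule hr, ?_⟩
  rw [algebraMap_smul, LocalizedModule.smul'_mk]
  exact hrm.localizedModule_mk hS s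
end
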